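/- arXiv:2408.13022 — 2 statements merged into one kernel-verified Lean document; each statement's English description precedes it below -/
import Mathlib

section
/- For any positive probability density π on Z, the SARIS asymptotic variance V(π) = (1/c1²) E_π[((f0(Z) - r* f1(Z))/π(Z))²] satisfies V(π) ≥ r*² (∫ |p1(z) - p0(z)| μ(dz))², with equality when π(z) ∝ |f0(z) - r* f1(z)| (assuming ∫|f0 - r* f1| dμ > 0). -/
open MeasureTheory

/-!
With `g = f0 - r* f1` and `N = ∫ |g| dμ`, the right-hand side equals `N² / c1²`, and
`E_π[(g/π)²] - N² = E_π[(|g|/π - N)²] ≥ 0`: the variance of `|g|/π` under `π`, whose mean is `N`.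
It vanishes exactly when `|g|/π` is constant, i.e. when `π = |g| / N`.
-/

section

variable {Z : Type*} [MeasurableSpace Z] {μ : Measure Z} {g π : Z → ℝ}

lemma integrable_abs_of_integrable_sq_div_mul (hπ : ∀ᵐ z ∂μ, 0 < π z) (hπint : Integrable π μ)
    (hg : Integrable (fun z => (g z / π z) ^ 2 * π z) μ) : Integrable (fun z => |g z|) μ := by
  -- `|g| = √((g/π)² π · π)` gives measurability, and AM-GM `2|g| ≤ g²/π + π` the domination.
  have hsqrt : (fun z => |g z|) =ᵐ[μ] fun z => √((g z / π z) ^ 2 * π z * π z) := by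
    filter_upwards [hπ] with z hz
    rw [show (g z / π z) ^ 2 * π z * π z = g z ^ 2 by field_simp, Real.sqrt_sq_eq_abs]
  refine Integrable.mono' ((hg.add hπint).div_const 2)
    ((Real.continuous_sqrt.comp_aestronglyMeasurable
      (hg.aestronglyMeasurable.mul hπint.aestronglyMeasurable)).congr hsqrt.symm) ?_
  filter_upwards [hπ] with z hz
  rw [Real.norm_eq_abs, abs_abs, Pi.add_apply,
    show (g z / π z) ^ 2 * π z = g z ^ 2 / π z by field_simp, le_div_iff₀ two_pos,
    div_add' _ _ _ hz.ne', le_div_iff₀ hz]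
  nlinarith [sq_nonneg (|g z| - π z), sq_abs (g z)]

lemma integral_sq_div_mul_sub_sq_integral_abs (hπ : ∀ᵐ z ∂μ, 0 < π z)
    (hπprob : ∫ z, π z ∂μ = 1) (hg : Integrable (fun z => (g z / π z) ^ 2 * π z) μ) :
    ∫ z, (g z / π z) ^ 2 * π z ∂μ - (∫ z, |g z| ∂μ) ^ 2 =
      ∫ z, (|g z| / π z - ∫ w, |g w| ∂μ) ^ 2 * π z ∂μ := by
  set N := ∫ w, |g w| ∂μ
  have hπint : Integrable π μ := .of_integral_ne_zero (by simp [hπprob])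
  have habs := integrable_abs_of_integrable_sq_div_mul hπ hπint hg
  have hexpand : (fun z => (|g z| / π z - N) ^ 2 * π z) =ᵐ[μ]
      fun z => (g z / π z) ^ 2 * π z - 2 * N * |g z| + N ^ 2 * π z := by
    filter_upwards [hπ] with z hz
    rw [div_pow, ← sq_abs (g z)]
    field_simp
    ring
  have hcross : Integrable (fun z => 2 * N * |g z|) μ := habs.const_mul _
  rw [integral_congr_ae hexpand,
    integral_add (f := fun z => _ - _) (hg.sub hcross) (hπint.const_mul _),
    integral_sub hg hcross, integral_const_mul, integral_const_mul, hπprob]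
  ring

lemma sq_integral_abs_le_integral_sq_div_mul (hπ : ∀ᵐ z ∂μ, 0 < π z)
    (hπprob : ∫ z, π z ∂μ = 1) (hg : Integrable (fun z => (g z / π z) ^ 2 * π z) μ) :
    (∫ z, |g z| ∂μ) ^ 2 ≤ ∫ z, (g z / π z) ^ 2 * π z ∂μ := by
  have hvar := integral_sq_div_mul_sub_sq_integral_abs hπ hπprob hg
  have hnonneg : 0 ≤ ∫ z, (|g z| / π z - ∫ w, |g w| ∂μ) ^ 2 * π z ∂μ :=
    integral_nonneg_of_ae <| by
      filter_upwards [hπ] with z hz using mul_nonneg (sq_nonneg _) hz.le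
  linarith

lemma integral_sq_div_mul_of_eq_abs_div (hπ : ∀ᵐ z ∂μ, 0 < π z)
    (hopt : ∀ᵐ z ∂μ, π z = |g z| / ∫ w, |g w| ∂μ) :
    ∫ z, (g z / π z) ^ 2 * π z ∂μ = (∫ z, |g z| ∂μ) ^ 2 := by
  set N := ∫ w, |g w| ∂μ
  have hpointwise : (fun z => (g z / π z) ^ 2 * π z) =ᵐ[μ] fun z => N * |g z| := by
    filter_upwards [hπ, hopt] with z hz hzopt
    have hN : N ≠ 0 := by rintro hN; rw [hN, div_zero] at hzopt; exact hz.ne' hzopt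
    have hg : |g z| ≠ 0 := by rintro hg; rw [hg, zero_div] at hzopt; exact hz.ne' hzopt
    rw [hzopt, div_pow, ← sq_abs (g z)]
    field_simp
  rw [integral_congr_ae hpointwise, integral_const_mul, sq]

end

theorem saris_optimal_variance_general
    {Z : Type*} [MeasurableSpace Z] (μ : Measure Z)
    (f0 f1 π : Z → ℝ)
    (c0 c1 : ℝ)
    (hc0pos : 0 < c0) (hc1pos : 0 < c1)
    (hπpos : ∀ z, 0 < π z) (hπprob : ∫ z, π z ∂μ = 1)
    (hint : Integrable (fun z => ((f0 z - (c0 / c1) * f1 z) / π z) ^ 2 * π z) μ) :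
    (1 / c1 ^ 2) * ∫ z, ((f0 z - (c0 / c1) * f1 z) / π z) ^ 2 * π z ∂μ ≥
      (c0 / c1) ^ 2 * (∫ z, |f1 z / c1 - f0 z / c0| ∂μ) ^ 2 ∧
    ((∀ z, π z = |f0 z - (c0 / c1) * f1 z| / ∫ w, |f0 w - (c0 / c1) * f1 w| ∂μ) →
      (1 / c1 ^ 2) * ∫ z, ((f0 z - (c0 / c1) * f1 z) / π z) ^ 2 * π z ∂μ =
        (c0 / c1) ^ 2 * (∫ z, |f1 z / c1 - f0 z / c0| ∂μ) ^ 2) := by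
  have hπ : ∀ᵐ z ∂μ, 0 < π z := .of_forall hπpos
  have habs_diff : ∀ z, |f1 z / c1 - f0 z / c0| = |f0 z - c0 / c1 * f1 z| / c0 := fun z => by
    rw [abs_sub_comm, show f0 z / c0 - f1 z / c1 = (f0 z - c0 / c1 * f1 z) / c0 by field_simp,
      abs_div, abs_of_pos hc0pos]
  have hrhs : (c0 / c1) ^ 2 * (∫ z, |f1 z / c1 - f0 z / c0| ∂μ) ^ 2 =
      1 / c1 ^ 2 * (∫ z, |f0 z - c0 / c1 * f1 z| ∂μ) ^ 2 := by
    simp_rw [habs_diff, integral_div]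
    field_simp
  rw [hrhs]
  exact ⟨mul_le_mul_of_nonneg_left (sq_integral_abs_le_integral_sq_div_mul hπ hπprob hint)
      (by positivity),
    fun hopt => by rw [integral_sq_div_mul_of_eq_abs_div hπ (.of_forall hopt)]⟩

/-- The SARIS asymptotic variance
V(π) = (1/c1²) E_π[((f0 - r* f1)/π)²] satisfies
V(π) ≥ r*² (∫ |p1 - p0| dμ)², with equality for π ∝ |f0 - r* f1|. -/
theorem saris_optimal_variance
    {Z : Type*} [MeasurableSpace Z] (μ : Measure Z) [SigmaFinite μ]
    (f0 f1 π : Z → ℝ)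
    (hf0pos : ∀ z, 0 < f0 z) (hf1pos : ∀ z, 0 < f1 z)
    (hf0int : Integrable f0 μ) (hf1int : Integrable f1 μ)
    (c0 c1 : ℝ) (hc0 : c0 = ∫ z, f0 z ∂μ) (hc1 : c1 = ∫ z, f1 z ∂μ)
    (hc0pos : 0 < c0) (hc1pos : 0 < c1)
    (hπpos : ∀ z, 0 < π z) (hπprob : ∫ z, π z ∂μ = 1)
    (hint : Integrable (fun z => ((f0 z - (c0 / c1) * f1 z) / π z) ^ 2 * π z) μ)
    (habs : Integrable (fun z => |f0 z - (c0 / c1) * f1 z|) μ)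
    (habspos : 0 < ∫ z, |f0 z - (c0 / c1) * f1 z| ∂μ) :
    (1 / c1 ^ 2) * ∫ z, ((f0 z - (c0 / c1) * f1 z) / π z) ^ 2 * π z ∂μ ≥
      (c0 / c1) ^ 2 * (∫ z, |f1 z / c1 - f0 z / c0| ∂μ) ^ 2 ∧
    ((∀ z, π z = |f0 z - (c0 / c1) * f1 z| / ∫ w, |f0 w - (c0 / c1) * f1 w| ∂μ) →
      (1 / c1 ^ 2) * ∫ z, ((f0 z - (c0 / c1) * f1 z) / π z) ^ 2 * π z ∂μ =
        (c0 / c1) ^ 2 * (∫ z, |f1 z / c1 - f0 z / c0| ∂μ) ^ 2) :=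
  saris_optimal_variance_general μ f0 f1 π c0 c1 hc0pos hc1pos hπpos hπprob hint
end

section
/- If μ({z : f0(z) = r f1(z)}) = 0 for all r and f1 is μ-essentially bounded, then the function c(r) = ∫ |f0(z) − r f1(z)| μ(dz) satisfies c(r) = −c0 + r c1 + 2 m(r) where m(r) = ∫_{A_r⁺} (f0 − r f1) dμ with A_r⁺ = {z : f0(z) > r f1(z)}; moreover m is differentiable with m'(r) = −∫_{A_r⁺} f1 dμ, and hence c'(r*) = c1 − 2∫_{A_{r*}⁺} f1 dμ. -/
/-!
Since `|x| = 2 x⁺ - x`, the function `c` is affine plus `2 m`, and `m(s) = ∫ (f0 - s f1)⁺ dμ`.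
For each `z` the integrand `s ↦ (f0 z - s f1 z)⁺` is `|f1 z|`-Lipschitz, and at `r` it is
differentiable with derivative `-f1 z · 1_{A_r⁺}(z)` unless `f0 z = r f1 z`, which happens only on
a null set. Differentiation under the integral sign, dominated by the integrable `|f1|`, gives `m'`.
-/

open MeasureTheory

theorem lipschitzWith_posPart_sub_mul (a b : ℝ) :
    LipschitzWith (Real.nnabs b) fun s : ℝ => (a - s * b)⁺ := by
  have affine : LipschitzWith (Real.nnabs b) fun s : ℝ => a - s * b := by
    refine LipschitzWith.of_dist_le_mul fun s t => le_of_eq ?_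
    rw [Real.coe_nnabs, Real.dist_eq, Real.dist_eq, ← abs_mul, ← abs_neg]
    ring_nf
  have := lipschitzWith_posPart.comp affine
  rwa [one_mul] at this

theorem HasDerivAt.posPart_of_ne_zero {φ : ℝ → ℝ} {φ' r : ℝ} (hφ : HasDerivAt φ φ' r)
    (hr : φ r ≠ 0) : HasDerivAt (fun s => (φ s)⁺) (if 0 < φ r then φ' else 0) r := by
  rcases hr.lt_or_gt with hneg | hpos
  · rw [if_neg hneg.not_gt]
    refine (hasDerivAt_const r 0).congr_of_eventuallyEq ?_
    filter_upwards [hφ.continuousAt.eventually_lt_const hneg] with s hs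
    exact posPart_eq_zero.2 hs.le
  · rw [if_pos hpos]
    refine hφ.congr_of_eventuallyEq ?_
    filter_upwards [hφ.continuousAt.eventually_const_lt hpos] with s hs
    exact posPart_eq_self.2 hs.le

section

variable {Z : Type*} [MeasurableSpace Z] {μ : Measure Z} {f g : Z → ℝ}

theorem setIntegral_gt_eq_integral_posPart_sub (hf : Measurable f) (hg : Measurable g) :
    ∫ z in {z | f z > g z}, (f z - g z) ∂μ = ∫ z, (f z - g z)⁺ ∂μ := by
  rw [← integral_indicator (measurableSet_lt hg hf)]
  congr 1 with z
  by_cases h : g z < f z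
  · rw [Set.indicator_of_mem (show z ∈ {z | g z < f z} from h),
      posPart_eq_self.2 (sub_nonneg.2 h.le)]
  · rw [Set.indicator_of_notMem (show z ∉ {z | g z < f z} from h),
      posPart_eq_zero.2 (sub_nonpos.2 (not_lt.1 h))]

theorem integral_abs_sub_mul_eq (hf : Integrable f μ) (hg : Integrable g μ) (r : ℝ) :
    ∫ z, |f z - r * g z| ∂μ = -∫ z, f z ∂μ + r * ∫ z, g z ∂μ + 2 * ∫ z, (f z - r * g z)⁺ ∂μ := by
  rw [integral_abs_eq_two_mul_integral_posPart_sub_integral (f := fun z => f z - r * g z)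
      (hf.sub (hg.const_mul r)),
    integral_sub hf (hg.const_mul r), integral_const_mul]
  ring

theorem hasDerivAt_integral_posPart_sub_mul (hf_meas : Measurable f) (hg_meas : Measurable g)
    (hf : Integrable f μ) (hg : Integrable g μ) {r : ℝ} (hr : μ {z | f z = r * g z} = 0) :
    HasDerivAt (fun s => ∫ z, (f z - s * g z)⁺ ∂μ) (-∫ z in {z | f z > r * g z}, g z ∂μ) r := by
  have hderiv : ∀ᵐ z ∂μ, HasDerivAt (fun s => (f z - s * g z)⁺)
      (if 0 < f z - r * g z then -g z else 0) r := by
    filter_upwards [measure_eq_zero_iff_ae_notMem.1 hr] with z hz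
    refine HasDerivAt.posPart_of_ne_zero ?_ (sub_ne_zero.2 hz)
    simpa using (hasDerivAt_mul_const (g z)).const_sub (f z)
  have hvalue : ∫ z, (if 0 < f z - r * g z then -g z else 0) ∂μ
      = -∫ z in {z | f z > r * g z}, g z ∂μ := by
    rw [← integral_neg, ← integral_indicator (measurableSet_lt (hg_meas.const_mul r) hf_meas)]
    congr 1 with z
    simp only [Set.indicator_apply, Set.mem_ofPred_eq, sub_pos]
  rw [← hvalue]
  exact (hasDerivAt_integral_of_dominated_loc_of_lip (F := fun s z => (f z - s * g z)⁺)
    (Metric.ball_mem_nhds r zero_lt_one)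
    (Filter.Eventually.of_forall fun s =>
      (hf_meas.sub (hg_meas.const_mul s)).posPart.aestronglyMeasurable)
    (hf.sub (hg.const_mul r)).pos_part
    (Measurable.ite (measurableSet_lt measurable_const (hf_meas.sub (hg_meas.const_mul r)))
      hg_meas.neg measurable_const).aestronglyMeasurable
    (Filter.Eventually.of_forall fun z =>
      (lipschitzWith_posPart_sub_mul (f z) (g z)).lipschitzOnWith)
    hg hderiv).2

theorem hasDerivAt_setIntegral_gt_sub_mul (hf_meas : Measurable f) (hg_meas : Measurable g)
    (hf : Integrable f μ) (hg : Integrable g μ) {r : ℝ} (hr : μ {z | f z = r * g z} = 0) :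
    HasDerivAt (fun s => ∫ z in {z | f z > s * g z}, (f z - s * g z) ∂μ)
      (-∫ z in {z | f z > r * g z}, g z ∂μ) r := by
  simp_rw [setIntegral_gt_eq_integral_posPart_sub (μ := μ) hf_meas (hg_meas.const_mul _)]
  exact hasDerivAt_integral_posPart_sub_mul hf_meas hg_meas hf hg hr

end

theorem abs_normalizing_constant_differentiable_general
    {Z : Type*} [MeasurableSpace Z] (μ : Measure Z)
    (f0 f1 : Z → ℝ)
    (hf0meas : Measurable f0) (hf1meas : Measurable f1)
    (hf0int : Integrable f0 μ) (hf1int : Integrable f1 μ)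
    (c0 c1 : ℝ) (hc0 : c0 = ∫ z, f0 z ∂μ) (hc1 : c1 = ∫ z, f1 z ∂μ)
    (hnull : ∀ r : ℝ, μ {z | f0 z = r * f1 z} = 0) :
    (∀ r : ℝ, ∫ z, |f0 z - r * f1 z| ∂μ =
      -c0 + r * c1 + 2 * ∫ z in {z | f0 z > r * f1 z}, (f0 z - r * f1 z) ∂μ) ∧
    (∀ r : ℝ, HasDerivAt
      (fun s => ∫ z in {z | f0 z > s * f1 z}, (f0 z - s * f1 z) ∂μ)
      (-(∫ z in {z | f0 z > r * f1 z}, f1 z ∂μ)) r) ∧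
    HasDerivAt (fun s => ∫ z, |f0 z - s * f1 z| ∂μ)
      (c1 - 2 * ∫ z in {z | f0 z > (c0 / c1) * f1 z}, f1 z ∂μ) (c0 / c1) := by
  have decomposition : ∀ r : ℝ, ∫ z, |f0 z - r * f1 z| ∂μ =
      -c0 + r * c1 + 2 * ∫ z in {z | f0 z > r * f1 z}, (f0 z - r * f1 z) ∂μ := fun r => by
    rw [integral_abs_sub_mul_eq hf0int hf1int,
      setIntegral_gt_eq_integral_posPart_sub hf0meas (hf1meas.const_mul r), hc0, hc1]
  have hasDerivAt_m : ∀ r : ℝ, HasDerivAt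
      (fun s => ∫ z in {z | f0 z > s * f1 z}, (f0 z - s * f1 z) ∂μ)
      (-(∫ z in {z | f0 z > r * f1 z}, f1 z ∂μ)) r := fun r =>
    hasDerivAt_setIntegral_gt_sub_mul hf0meas hf1meas hf0int hf1int (hnull r)
  refine ⟨decomposition, hasDerivAt_m, ?_⟩
  rw [funext decomposition]
  exact (((hasDerivAt_mul_const c1).const_add (-c0)).add
    ((hasDerivAt_m (c0 / c1)).const_mul 2)).congr_deriv (by ring)

/-- If μ({f0 = r f1}) = 0 for all r and f1 is essentially bounded,
then c(r) = ∫|f0 − r f1| dμ = −c0 + r c1 + 2 m(r) with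
m(r) = ∫_{A_r⁺}(f0 − r f1) dμ, m is differentiable with
m'(r) = −∫_{A_r⁺} f1 dμ, and c'(r*) = c1 − 2∫_{A_{r*}⁺} f1 dμ. -/
theorem abs_normalizing_constant_differentiable
    {Z : Type*} [MeasurableSpace Z] (μ : Measure Z) [SigmaFinite μ]
    (f0 f1 : Z → ℝ)
    (hf0meas : Measurable f0) (hf1meas : Measurable f1)
    (hf0pos : ∀ z, 0 < f0 z) (hf1pos : ∀ z, 0 < f1 z)
    (hf0int : Integrable f0 μ) (hf1int : Integrable f1 μ)
    (c0 c1 : ℝ) (hc0 : c0 = ∫ z, f0 z ∂μ) (hc1 : c1 = ∫ z, f1 z ∂μ)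
    (hc0pos : 0 < c0) (hc1pos : 0 < c1)
    (f1bar : ℝ) (hf1bdd : ∀ᵐ z ∂μ, f1 z ≤ f1bar)
    (hnull : ∀ r : ℝ, μ {z | f0 z = r * f1 z} = 0) :
    (∀ r : ℝ, ∫ z, |f0 z - r * f1 z| ∂μ =
      -c0 + r * c1 + 2 * ∫ z in {z | f0 z > r * f1 z}, (f0 z - r * f1 z) ∂μ) ∧
    (∀ r : ℝ, HasDerivAt
      (fun s => ∫ z in {z | f0 z > s * f1 z}, (f0 z - s * f1 z) ∂μ)
      (-(∫ z in {z | f0 z > r * f1 z}, f1 z ∂μ)) r) ∧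
    HasDerivAt (fun s => ∫ z, |f0 z - s * f1 z| ∂μ)
      (c1 - 2 * ∫ z in {z | f0 z > (c0 / c1) * f1 z}, f1 z ∂μ) (c0 / c1) :=
  abs_normalizing_constant_differentiable_general μ f0 f1 hf0meas hf1meas hf0int hf1int c0 c1 hc0
    hc1 hnull
end
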